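/- arXiv:1110.3939 — 5 statements merged into one kernel-verified Lean document; each statement's English description precedes it below -/
import Mathlib

section
/- Let ℱ be a family of subsets of a finite set F satisfying axioms A1–A5. Then each element f ∈ F belongs to at most two minimal proper subsets of ℱ, where a minimal proper subset of ℱ is a proper subset D ∈ ℱ of F such that no proper subset D' ∈ ℱ of F satisfies D' ⊊ D. -/
variable {α : Type*}

/-- `r` is a strict linear order (complete, transitive, antisymmetric) on the set `C`. -/
def IsLinOn (C : Set α) (r : α → α → Prop) : Prop :=
  (∀ a ∈ C, ¬r a a) ∧
    (∀ a ∈ C, ∀ b ∈ C, ∀ c ∈ C, r a b → r b c → r a c) ∧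
      ∀ a ∈ C, ∀ b ∈ C, a ≠ b → r a b ∨ r b a

/-- A preference profile over `C`: a (nonempty) finite tuple of linear orders on `C`. -/
def IsProfile (C : Set α) {n : ℕ} (R : Fin n → α → α → Prop) : Prop :=
  0 < n ∧ ∀ i, IsLinOn C (R i)

/-- `X` is a clone set for the profile `R` over `C`. -/
def IsCloneSet (C : Set α) {n : ℕ} (R : Fin n → α → α → Prop) (X : Set α) : Prop :=
  X.Nonempty ∧ X ⊆ C ∧
    ∀ c ∈ X, ∀ c' ∈ X, ∀ a ∈ C \ X, ∀ i, (R i c a ↔ R i c' a)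

/-- The clone structure of `R`: the family of all clone sets. -/
def cloneSets (C : Set α) {n : ℕ} (R : Fin n → α → α → Prop) : Set (Set α) :=
  {X | IsCloneSet C R X}

/-- `X` and `Y` intersect non-trivially. -/
def Bowtie (X Y : Set α) : Prop :=
  (X ∩ Y).Nonempty ∧ (X \ Y).Nonempty ∧ (Y \ X).Nonempty

/-- `Z` is a proper minimal superset of `X` in the family `𝓕`. -/
def IsProperMinimalSuperset (𝓕 : Set (Set α)) (X Z : Set α) : Prop :=
  Z ∈ 𝓕 ∧ X ⊆ Z ∧ X ≠ Z ∧ ∀ Y ∈ 𝓕, X ⊆ Y → Y ⊆ Z → Y = X ∨ Y = Z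

/-- The family `𝓕` contains a bicycle chain. -/
def HasBicycleChain (𝓕 : Set (Set α)) : Prop :=
  ∃ (k : ℕ) (A : ZMod k → Set α), 3 ≤ k ∧ (∀ i, A i ∈ 𝓕) ∧
    ∀ i : ZMod k,
      Bowtie (A (i - 1)) (A i) ∧ A (i - 1) ∩ A i ∩ A (i + 1) = ∅ ∧
        A i ⊆ A (i - 1) ∪ A (i + 1)

/-- A family `𝓕` of subsets of `F` satisfies axioms A1–A5. -/
def SatisfiesAxioms (F : Set α) (𝓕 : Set (Set α)) : Prop :=
  (∀ X ∈ 𝓕, X ⊆ F) ∧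
    ((∀ f ∈ F, ({f} : Set α) ∈ 𝓕) ∧ (∅ : Set α) ∉ 𝓕 ∧ F ∈ 𝓕) ∧
    (∀ C₁ ∈ 𝓕, ∀ C₂ ∈ 𝓕, (C₁ ∩ C₂).Nonempty → C₁ ∪ C₂ ∈ 𝓕 ∧ C₁ ∩ C₂ ∈ 𝓕) ∧
    (∀ C₁ ∈ 𝓕, ∀ C₂ ∈ 𝓕, Bowtie C₁ C₂ → C₁ \ C₂ ∈ 𝓕 ∧ C₂ \ C₁ ∈ 𝓕) ∧
    (∀ X ∈ 𝓕, {Z | IsProperMinimalSuperset 𝓕 X Z}.encard ≤ 2) ∧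
    ¬HasBicycleChain 𝓕

/-- `Y` is a proper subset of `Z`: `Y ⊆ Z` and `1 < |Y| < |Z|`. -/
def IsProperSubsetOf (Y Z : Set α) : Prop :=
  Y ⊆ Z ∧ 1 < Y.ncard ∧ Y.ncard < Z.ncard

/-- `𝓔` is a subfamily of `𝓕` with support `E`. -/
def IsSubfamilyWithSupport (𝓕 𝓔 : Set (Set α)) (E : Set α) : Prop :=
  E ∈ 𝓕 ∧ 𝓔 = {X ∈ 𝓕 | X ⊆ E} ∧ ∀ X ∈ 𝓕, X ∉ 𝓔 → E ⊆ X ∨ X ∩ E = ∅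

/-- The family `𝓕` over ground set `F` has no proper subfamilies. -/
def IrreducibleFamily (F : Set α) (𝓕 : Set (Set α)) : Prop :=
  ¬∃ (𝓔 : Set (Set α)) (E : Set α),
      IsSubfamilyWithSupport 𝓕 𝓔 E ∧ IsProperSubsetOf E F

/-- `D` is a minimal proper subset of `F` belonging to the family `𝓕`. -/
def IsMinProperSubset (F : Set α) (𝓕 : Set (Set α)) (D : Set α) : Prop :=
  D ∈ 𝓕 ∧ IsProperSubsetOf D F ∧ ∀ D' ∈ 𝓕, IsProperSubsetOf D' F → ¬D' ⊂ D

/-! Two distinct minimal proper subsets through `f` meet in a member of `𝓕` strictly inside each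
of them, which by minimality cannot be a proper subset, so they meet exactly in `{f}`. Each of them
contains a proper minimal superset of `{f}`, and by the above no two of them contain the same
one; so A4 applied to `{f}` bounds their number by two. -/

theorem Set.encard_le_encard_of_forall_exists {β : Type*} {s : Set α} {t : Set β}
    (r : α → β → Prop) (hex : ∀ a ∈ s, ∃ b ∈ t, r a b)
    (hinj : ∀ a ∈ s, ∀ a' ∈ s, ∀ b ∈ t, r a b → r a' b → a = a') : s.encard ≤ t.encard := by
  obtain rfl | ⟨a₀, ha₀⟩ := s.eq_empty_or_nonempty
  · simp
  have : Nonempty β := ⟨(hex a₀ ha₀).choose⟩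
  choose! g hgt hg using hex
  exact Set.encard_le_encard_of_injOn hgt
    fun a ha a' ha' h => hinj a ha a' ha' (g a) (hgt a ha) (hg a ha) (h ▸ hg a' ha')

section

variable {𝓕 : Set (Set α)} {F D D' X Z : Set α} {f : α}

theorem IsProperSubsetOf.finite (h : IsProperSubsetOf D F) : D.Finite :=
  Set.finite_of_ncard_pos (zero_lt_one.trans h.2.1)

theorem IsProperSubsetOf.singleton_ssubset (h : IsProperSubsetOf D F) (hf : f ∈ D) :
    {f} ⊂ D :=
  Set.ssubset_iff_subset_ne.2 ⟨Set.singleton_subset_iff.2 hf, by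
    rintro rfl
    exact (Set.ncard_singleton f ▸ h.2.1).false⟩

theorem IsMinProperSubset.inter_eq_singleton
    (hinter : ∀ C₁ ∈ 𝓕, ∀ C₂ ∈ 𝓕, (C₁ ∩ C₂).Nonempty → C₁ ∩ C₂ ∈ 𝓕)
    (hD : IsMinProperSubset F 𝓕 D) (hD' : IsMinProperSubset F 𝓕 D') (hne : D ≠ D')
    (hf : f ∈ D) (hf' : f ∈ D') : D ∩ D' = {f} := by
  obtain ⟨hD𝓕, hDF, hDmin⟩ := hD
  have hfin : (D ∩ D').Finite := hDF.finite.inter_of_left D'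
  have hinter_ssubset : D ∩ D' ⊂ D := by
    refine Set.ssubset_iff_subset_ne.2 ⟨Set.inter_subset_left, fun h => ?_⟩
    have hDD' : D ⊆ D' := h ▸ Set.inter_subset_right
    exact hD'.2.2 D hD𝓕 hDF (Set.ssubset_iff_subset_ne.2 ⟨hDD', hne⟩)
  have hnot_proper : ¬IsProperSubsetOf (D ∩ D') F :=
    fun hp => hDmin _ (hinter D hD𝓕 D' hD'.1 ⟨f, hf, hf'⟩) hp hinter_ssubset
  have hcard_lt : (D ∩ D').ncard < F.ncard :=
    (Set.ncard_le_ncard Set.inter_subset_left hDF.finite).trans_lt hDF.2.2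
  have hcard_le : (D ∩ D').ncard ≤ 1 := by
    by_contra h
    exact hnot_proper ⟨Set.inter_subset_left.trans hDF.1, not_le.1 h, hcard_lt⟩
  exact Set.eq_singleton_iff_unique_mem.2
    ⟨⟨hf, hf'⟩, fun x hx => (Set.ncard_le_one hfin).1 hcard_le x hx f ⟨hf, hf'⟩⟩

theorem IsMinProperSubset.eq_of_isProperMinimalSuperset_subset
    (hinter : ∀ C₁ ∈ 𝓕, ∀ C₂ ∈ 𝓕, (C₁ ∩ C₂).Nonempty → C₁ ∩ C₂ ∈ 𝓕)
    (hD : IsMinProperSubset F 𝓕 D) (hD' : IsMinProperSubset F 𝓕 D') (hf : f ∈ D) (hf' : f ∈ D')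
    (hZ : IsProperMinimalSuperset 𝓕 {f} Z) (hZD : Z ⊆ D) (hZD' : Z ⊆ D') : D = D' := by
  by_contra hne
  have hZf : Z ⊆ {f} :=
    hD.inter_eq_singleton hinter hD' hne hf hf' ▸ Set.subset_inter hZD hZD'
  exact hZ.2.2.1 (hZ.2.1.antisymm hZf)

theorem exists_isProperMinimalSuperset_subset (hD : D ∈ 𝓕) (hfin : D.Finite) (hXD : X ⊂ D) :
    ∃ Z, IsProperMinimalSuperset 𝓕 X Z ∧ Z ⊆ D := by
  set T := {Y | Y ∈ 𝓕 ∧ X ⊂ Y ∧ Y ⊆ D}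
  have hT : T.Finite := hfin.finite_subsets.subset fun Y hY => hY.2.2
  obtain ⟨Z, hZD, ⟨hZ𝓕, hXZ, -⟩, hZmin⟩ := hT.exists_le_minimal ⟨hD, hXD, subset_rfl⟩
  refine ⟨Z, ⟨hZ𝓕, hXZ.subset, hXZ.ne, fun Y hY𝓕 hXY hYZ => ?_⟩, hZD⟩
  rcases hXY.eq_or_ssubset with rfl | hXY
  · exact Or.inl rfl
  · exact Or.inr (hYZ.antisymm (hZmin ⟨hY𝓕, hXY, hYZ.trans hZD⟩ hYZ))

end

theorem element_in_at_most_two_minimal_proper_subsets_general (F : Set α)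
    (𝓕 : Set (Set α)) (hax : SatisfiesAxioms F 𝓕) (f : α) (hf : f ∈ F) :
    {D | IsMinProperSubset F 𝓕 D ∧ f ∈ D}.encard ≤ 2 := by
  obtain ⟨-, ⟨hsingleton, -, -⟩, hunion_inter, -, hA4, -⟩ := hax
  have hinter : ∀ C₁ ∈ 𝓕, ∀ C₂ ∈ 𝓕, (C₁ ∩ C₂).Nonempty → C₁ ∩ C₂ ∈ 𝓕 :=
    fun C₁ h₁ C₂ h₂ h => (hunion_inter C₁ h₁ C₂ h₂ h).2
  calc {D | IsMinProperSubset F 𝓕 D ∧ f ∈ D}.encard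
      ≤ {Z | IsProperMinimalSuperset 𝓕 {f} Z}.encard := by
        refine Set.encard_le_encard_of_forall_exists (fun D Z => Z ⊆ D) ?_ ?_
        · rintro D ⟨hD, hfD⟩
          exact exists_isProperMinimalSuperset_subset hD.1 hD.2.1.finite
            (hD.2.1.singleton_ssubset hfD)
        · rintro D ⟨hD, hfD⟩ D' ⟨hD', hfD'⟩ Z hZ hZD hZD'
          exact hD.eq_of_isProperMinimalSuperset_subset hinter hD' hfD hfD' hZ hZD hZD'
    _ ≤ 2 := hA4 {f} (hsingleton f hf)

theorem element_in_at_most_two_minimal_proper_subsets (F : Set α) (hF : F.Finite)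
    (𝓕 : Set (Set α)) (hax : SatisfiesAxioms F 𝓕) (f : α) (hf : f ∈ F) :
    {D | IsMinProperSubset F 𝓕 D ∧ f ∈ D}.encard ≤ 2 :=
  element_in_at_most_two_minimal_proper_subsets_general F 𝓕 hax f hf
end

section
/- Let R be a preference profile over a finite candidate set C with |peak(R)| ≥ 2 that is single-peaked with respect to two linear orders > and >' on C. Let p_1 and p_2 be the extreme peaks of R with respect to > with p_1 > p_2. Then p_1 and p_2 are also the extreme peaks of R with respect to >'. Moreover, if p_1 >' p_2, then > and >' agree on the set P = {c ∈ C : p_1 > c > p_2} ∪ {p_1, p_2}, i.e., for all a, b ∈ P, a > b if and only if a >' b. -/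
variable {α : Type*}

/-- `r` is compatible with the societal axis `ax` on `C`. -/
def AxisCompatible (C : Set α) (ax r : α → α → Prop) : Prop :=
  ∀ c ∈ C, ∀ d ∈ C, ∀ e ∈ C, ((ax c d ∧ ax d e) ∨ (ax e d ∧ ax d c)) → r c d → r d e

/-- The profile `R` is single-peaked with respect to the societal axis `ax`. -/
def SinglePeakedWrt (C : Set α) {n : ℕ} (R : Fin n → α → α → Prop)
    (ax : α → α → Prop) : Prop :=
  IsLinOn C ax ∧ ∀ i, AxisCompatible C ax (R i)

/-- The profile `R` is single-peaked. -/
def SinglePeaked (C : Set α) {n : ℕ} (R : Fin n → α → α → Prop) : Prop :=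
  ∃ ax, SinglePeakedWrt C R ax

/-- `p` is the top-ranked candidate of the order `r` on `C`. -/
def IsPeakOf (C : Set α) (r : α → α → Prop) (p : α) : Prop :=
  p ∈ C ∧ ∀ a ∈ C, a ≠ p → r p a

/-- The set of peaks of the profile `R`. -/
def peakSet (C : Set α) {n : ℕ} (R : Fin n → α → α → Prop) : Set α :=
  {p | ∃ i, IsPeakOf C (R i) p}

/-- `p₁` and `p₂` are the extreme peaks of `R` with respect to the axis `gt`,
with `p₁` above `p₂`. -/
def ExtremePeaksWrt (C : Set α) {n : ℕ} (R : Fin n → α → α → Prop)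
    (gt : α → α → Prop) (p₁ p₂ : α) : Prop :=
  p₁ ∈ peakSet C R ∧ p₂ ∈ peakSet C R ∧ gt p₁ p₂ ∧
    ∀ p ∈ peakSet C R, p ≠ p₁ → p ≠ p₂ → gt p₁ p ∧ gt p p₂

/-!
Two candidates `d, e` with `d` strictly between a voter's peak `p` and `e` on one axis cannot
have `e` strictly between `p` and `d` on another axis: single-peakedness would make the voter
prefer `d` to `e` and `e` to `d`. Applied to the voters whose peaks are the extreme peaks, this
keeps every candidate between `p₁` and `p₂` on `>` between them on `>'`, so the extreme peaks
stay extreme; applied to the voter with peak `p₁`, it shows that `>` and `>'` order the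
candidates of that interval alike.
-/

variable {C : Set α} {r r' ax ax' : α → α → Prop}

/-- `b` lies strictly between `a` and `c` on the axis `ax`. -/
def AxisBetween (ax : α → α → Prop) (a b c : α) : Prop :=
  (ax a b ∧ ax b c) ∨ (ax c b ∧ ax b a)

theorem AxisBetween.symm {a b c : α} (h : AxisBetween ax a b c) : AxisBetween ax c b a :=
  Or.symm h

namespace IsLinOn

theorem ne_of_rel (h : IsLinOn C r) {a b : α} (ha : a ∈ C) (hab : r a b) : a ≠ b := by
  rintro rfl
  exact h.1 a ha hab

theorem asymm (h : IsLinOn C r) {a b : α} (ha : a ∈ C) (hb : b ∈ C) (hab : r a b) :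
    ¬r b a :=
  fun hba => h.1 a ha (h.2.1 a ha b hb a ha hab hba)

theorem swap (h : IsLinOn C r) : IsLinOn C (fun a b => r b a) :=
  ⟨h.1, fun a ha b hb c hc hab hbc => h.2.1 c hc b hb a ha hbc hab,
    fun a ha b hb hne => (h.2.2 a ha b hb hne).symm⟩

theorem rel_iff_of_rel_imp (h : IsLinOn C r) (h' : IsLinOn C r') {S : Set α} (hS : S ⊆ C)
    (himp : ∀ a ∈ S, ∀ b ∈ S, r a b → r' a b) :
    ∀ a ∈ S, ∀ b ∈ S, (r a b ↔ r' a b) := by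
  refine fun a ha b hb => ⟨himp a ha b hb, fun hab' => ?_⟩
  rcases h.2.2 a (hS ha) b (hS hb) (h'.ne_of_rel (hS ha) hab') with hab | hba
  · exact hab
  · exact absurd (himp b hb a ha hba) (h'.asymm (hS ha) (hS hb) hab')

end IsLinOn

namespace AxisCompatible

theorem swap (hc : AxisCompatible C ax r) : AxisCompatible C (fun a b => ax b a) r :=
  fun c hc' d hd e he hbet => hc c hc' d hd e he (hbet.symm.imp And.symm And.symm)

theorem rel_of_between (hc : AxisCompatible C ax r) (hax : IsLinOn C ax) {p d e : α}
    (hp : IsPeakOf C r p) (hd : d ∈ C) (he : e ∈ C) (hbet : AxisBetween ax p d e) : r d e := by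
  have hpd : p ≠ d := by
    rcases hbet with ⟨hpd, -⟩ | ⟨-, hdp⟩
    · exact hax.ne_of_rel hp.1 hpd
    · exact (hax.ne_of_rel hd hdp).symm
  exact hc p hp.1 d hd e he hbet (hp.2 d hd hpd.symm)

theorem not_between_of_between (hc : AxisCompatible C ax r) (hc' : AxisCompatible C ax' r)
    (hr : IsLinOn C r) (hax : IsLinOn C ax) (hax' : IsLinOn C ax') {p d e : α}
    (hp : IsPeakOf C r p) (hd : d ∈ C) (he : e ∈ C) (hbet : AxisBetween ax p d e) :
    ¬AxisBetween ax' p e d :=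
  fun hbet' => hr.asymm hd he (hc.rel_of_between hax hp hd he hbet)
    (hc'.rel_of_between hax' hp he hd hbet')

/-- Two axes along which `r` is single-peaked order the candidates on either side of the peak
alike. -/
theorem rel_of_rel_of_isPeakOf (hc : AxisCompatible C ax r) (hc' : AxisCompatible C ax' r)
    (hr : IsLinOn C r) (hax : IsLinOn C ax) (hax' : IsLinOn C ax') {p a b : α}
    (hp : IsPeakOf C r p) (ha : a ∈ C) (hb : b ∈ C) (hpa : a = p ∨ ax p a) (hab : ax a b)
    (hpb : ax' p b) : ax' a b := by
  rcases hax'.2.2 a ha b hb (hax.ne_of_rel ha hab) with hab' | hba'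
  · exact hab'
  · exfalso
    rcases hpa with rfl | hpa
    · exact hax'.asymm ha hb hpb hba'
    · exact hc.not_between_of_between hc' hr hax hax' hp ha hb (.inl ⟨hpa, hab⟩)
        (.inl ⟨hpb, hba'⟩)

end AxisCompatible

namespace SinglePeakedWrt

variable {n : ℕ} {R : Fin n → α → α → Prop}

theorem swap (h : SinglePeakedWrt C R ax) : SinglePeakedWrt C R (fun a b => ax b a) :=
  ⟨h.1.swap, fun i => (h.2 i).swap⟩

theorem rel_left_of_between_peaks (hR : ∀ i, IsLinOn C (R i)) (h : SinglePeakedWrt C R ax)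
    (h' : SinglePeakedWrt C R ax') {q₁ q₂ c : α} (hq₁ : q₁ ∈ C) (hq₂ : q₂ ∈ peakSet C R)
    (h12' : ax' q₁ q₂) (hc : c ∈ C) (h1c : ax q₁ c) (hc2 : ax c q₂) : ax' q₁ c := by
  obtain ⟨j, hj⟩ := hq₂
  rcases h'.1.2.2 q₁ hq₁ c hc (h.1.ne_of_rel hq₁ h1c) with h1c' | hc1'
  · exact h1c'
  · exact absurd (.inr ⟨hc1', h12'⟩) ((h.2 j).not_between_of_between (h'.2 j) (hR j) h.1 h'.1
      hj hc hq₁ (.inr ⟨h1c, hc2⟩))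

theorem between_peaks (hR : ∀ i, IsLinOn C (R i)) (h : SinglePeakedWrt C R ax)
    (h' : SinglePeakedWrt C R ax') {q₁ q₂ c : α} (hq₁ : q₁ ∈ peakSet C R)
    (hq₂ : q₂ ∈ peakSet C R) (h12' : ax' q₁ q₂) (hc : c ∈ C) (h1c : ax q₁ c) (hc2 : ax c q₂) :
    ax' q₁ c ∧ ax' c q₂ := by
  obtain ⟨i, hi⟩ := hq₁
  obtain ⟨j, hj⟩ := hq₂
  exact ⟨h.rel_left_of_between_peaks hR h' hi.1 ⟨j, hj⟩ h12' hc h1c hc2,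
    h.swap.rel_left_of_between_peaks hR h'.swap hj.1 ⟨i, hi⟩ h12' hc hc2 h1c⟩

end SinglePeakedWrt

namespace ExtremePeaksWrt

variable {n : ℕ} {R : Fin n → α → α → Prop} {p₁ p₂ : α}

theorem swap (hext : ExtremePeaksWrt C R ax p₁ p₂) :
    ExtremePeaksWrt C R (fun a b => ax b a) p₂ p₁ :=
  ⟨hext.2.1, hext.1, hext.2.2.1, fun p hp hp₂ hp₁ => (hext.2.2.2 p hp hp₁ hp₂).symm⟩

theorem of_singlePeakedWrt (hR : ∀ i, IsLinOn C (R i)) (h : SinglePeakedWrt C R ax)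
    (h' : SinglePeakedWrt C R ax') (hext : ExtremePeaksWrt C R ax p₁ p₂) (h12' : ax' p₁ p₂) :
    ExtremePeaksWrt C R ax' p₁ p₂ := by
  refine ⟨hext.1, hext.2.1, h12', fun p hp hp₁ hp₂ => ?_⟩
  obtain ⟨h1p, hp2⟩ := hext.2.2.2 p hp hp₁ hp₂
  obtain ⟨k, hk⟩ := hp
  exact h.between_peaks hR h' hext.1 hext.2.1 h12' hk.1 h1p hp2

theorem rel_left_of_mem (hR : ∀ i, IsLinOn C (R i)) (h : SinglePeakedWrt C R ax)
    (h' : SinglePeakedWrt C R ax') (hext : ExtremePeaksWrt C R ax p₁ p₂) (h12' : ax' p₁ p₂)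
    {c : α} (hc : c ∈ {c ∈ C | ax p₁ c ∧ ax c p₂} ∪ {p₁, p₂}) (hcp₁ : c ≠ p₁) : ax' p₁ c := by
  rcases hc with ⟨hc, h1c, hc2⟩ | rfl | rfl
  · exact (h.between_peaks hR h' hext.1 hext.2.1 h12' hc h1c hc2).1
  · exact absurd rfl hcp₁
  · exact h12'

end ExtremePeaksWrt

theorem extreme_peaks_unique_general (C : Set α) {n : ℕ}
    (R : Fin n → α → α → Prop) (hR : IsProfile C R)
    (gt gt' : α → α → Prop)
    (h : SinglePeakedWrt C R gt) (h' : SinglePeakedWrt C R gt')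
    (p₁ p₂ : α) (hext : ExtremePeaksWrt C R gt p₁ p₂) :
    (ExtremePeaksWrt C R gt' p₁ p₂ ∨ ExtremePeaksWrt C R gt' p₂ p₁) ∧
      (gt' p₁ p₂ →
        ∀ a ∈ {c ∈ C | gt p₁ c ∧ gt c p₂} ∪ {p₁, p₂},
          ∀ b ∈ {c ∈ C | gt p₁ c ∧ gt c p₂} ∪ {p₁, p₂},
            (gt a b ↔ gt' a b)) := by
  obtain ⟨i, hi⟩ := hext.1
  obtain ⟨j, hj⟩ := hext.2.1
  refine ⟨?_, fun h12' => ?_⟩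
  · rcases h'.1.2.2 p₁ hi.1 p₂ hj.1 (h.1.ne_of_rel hi.1 hext.2.2.1) with h12' | h21'
    · exact .inl (hext.of_singlePeakedWrt hR.2 h h' h12')
    · exact .inr (hext.swap.of_singlePeakedWrt hR.2 h.swap h' h21')
  have hsub : {c ∈ C | gt p₁ c ∧ gt c p₂} ∪ {p₁, p₂} ⊆ C := by
    rintro c (⟨hc, -⟩ | rfl | rfl)
    exacts [hc, hi.1, hj.1]
  refine h.1.rel_iff_of_rel_imp h'.1 hsub fun a ha b hb hab => ?_
  have ha₁ : a = p₁ ∨ gt p₁ a :=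
    (eq_or_ne a p₁).imp_right (hext.rel_left_of_mem hR.2 h h hext.2.2.1 ha)
  have hb₁ : b ≠ p₁ := by
    rintro rfl
    rcases ha₁ with rfl | hba
    exacts [h.1.ne_of_rel (hsub ha) hab rfl, h.1.asymm (hsub hb) (hsub ha) hba hab]
  exact (h.2 i).rel_of_rel_of_isPeakOf (h'.2 i) (hR.2 i) h.1 h'.1 hi (hsub ha) (hsub hb) ha₁ hab
    (hext.rel_left_of_mem hR.2 h h' h12' hb hb₁)

theorem extreme_peaks_unique (C : Set α) (hC : C.Finite) {n : ℕ}
    (R : Fin n → α → α → Prop) (hR : IsProfile C R)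
    (gt gt' : α → α → Prop)
    (h : SinglePeakedWrt C R gt) (h' : SinglePeakedWrt C R gt')
    (hpk : 2 ≤ (peakSet C R).encard)
    (p₁ p₂ : α) (hext : ExtremePeaksWrt C R gt p₁ p₂) :
    (ExtremePeaksWrt C R gt' p₁ p₂ ∨ ExtremePeaksWrt C R gt' p₂ p₁) ∧
      (gt' p₁ p₂ →
        ∀ a ∈ {c ∈ C | gt p₁ c ∧ gt c p₂} ∪ {p₁, p₂},
          ∀ b ∈ {c ∈ C | gt p₁ c ∧ gt c p₂} ∪ {p₁, p₂},
            (gt a b ↔ gt' a b)) :=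
  extreme_peaks_unique_general C R hR gt gt' h h' p₁ p₂ hext
end

section
/- Let R be a single-peaked preference profile over a finite candidate set C, let D be a clone set for R with |D| ≥ 2, and let c be a candidate not in C. Then the decloned profile R(D ↦ c) is single-peaked. -/
variable {α : Type*}

/-- The order obtained from `r` by collapsing the clone set `D` into the fresh
candidate `c`. -/
def decloneRel (r : α → α → Prop) (D : Set α) (c : α) : α → α → Prop := fun x y =>
  (x ≠ c ∧ y ≠ c ∧ r x y) ∨
    (x = c ∧ y ≠ c ∧ ∃ d ∈ D, r d y) ∨
      (x ≠ c ∧ y = c ∧ ∃ d ∈ D, r x d)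

/-!
Fix a representative `d₀ ∈ D` and send the new candidate `c` to `d₀`, every other candidate to
itself. On `(C \ D) ∪ {c}` this map is injective into `C`, and since all members of `D` sit
in the same position relative to the outsiders, the decloned orders are exactly the pullbacks
of the original orders along it. Pulling back the societal axis along the same map therefore
witnesses single-peakedness of the decloned profile.
-/

open Set

section Comap

variable {β : Type*} {C : Set α} {S : Set β} {f : β → α}

theorem IsLinOn.comap {r : α → α → Prop} (h : IsLinOn C r) (hf : MapsTo f S C)
    (hinj : InjOn f S) : IsLinOn S (fun x y => r (f x) (f y)) := by
  obtain ⟨hirr, htrans, htot⟩ := h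
  exact ⟨fun a ha => hirr _ (hf ha),
    fun a ha b hb c hc => htrans _ (hf ha) _ (hf hb) _ (hf hc),
    fun a ha b hb hne => htot _ (hf ha) _ (hf hb) fun h => hne (hinj ha hb h)⟩

theorem AxisCompatible.comap {ax r : α → α → Prop} {r' : β → β → Prop}
    (h : AxisCompatible C ax r) (hf : MapsTo f S C)
    (hr' : ∀ x ∈ S, ∀ y ∈ S, r' x y ↔ r (f x) (f y)) :
    AxisCompatible S (fun x y => ax (f x) (f y)) r' :=
  fun x hx y hy z hz haxis hxy =>
    (hr' y hy z hz).2 <|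
      h _ (hf hx) _ (hf hy) _ (hf hz) haxis ((hr' x hx y hy).1 hxy)

theorem SinglePeakedWrt.comap {n : ℕ} {R : Fin n → α → α → Prop} {R' : Fin n → β → β → Prop}
    {ax : α → α → Prop} (h : SinglePeakedWrt C R ax) (hf : MapsTo f S C) (hinj : InjOn f S)
    (hR' : ∀ i, ∀ x ∈ S, ∀ y ∈ S, R' i x y ↔ R i (f x) (f y)) :
    SinglePeakedWrt S R' (fun x y => ax (f x) (f y)) :=
  ⟨h.1.comap hf hinj, fun i => (h.2 i).comap hf (hR' i)⟩

end Comap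

theorem IsLinOn.rel_iff_not_rel {C : Set α} {r : α → α → Prop} (h : IsLinOn C r)
    {a b : α} (ha : a ∈ C) (hb : b ∈ C) (hne : a ≠ b) : r a b ↔ ¬r b a :=
  ⟨fun hab hba => h.1 a ha (h.2.1 a ha b hb a ha hab hba),
    fun hba => (h.2.2 a ha b hb hne).resolve_right hba⟩

section Declone

variable {C D : Set α} {r : α → α → Prop} {c d₀ : α}

theorem IsLinOn.rel_iff_of_clone (hr : IsLinOn C r) (hDC : D ⊆ C)
    (hclone : ∀ d ∈ D, ∀ d' ∈ D, ∀ a ∈ C \ D, r d a ↔ r d' a)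
    {d d' a : α} (hd : d ∈ D) (hd' : d' ∈ D) (ha : a ∈ C \ D) : r a d ↔ r a d' := by
  have hne : ∀ {e}, e ∈ D → a ≠ e := fun he hae => ha.2 (hae ▸ he)
  rw [hr.rel_iff_not_rel ha.1 (hDC hd) (hne hd), hr.rel_iff_not_rel ha.1 (hDC hd') (hne hd'),
    hclone d hd d' hd' a ha]

theorem mapsTo_update_declone [DecidableEq α] (hd₀ : d₀ ∈ C) :
    MapsTo (Function.update id c d₀) ((C \ D) ∪ {c}) C := by
  intro x hx
  by_cases hxc : x = c
  · rwa [hxc, Function.update_self]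
  · rw [Function.update_of_ne hxc]
    exact (hx.resolve_right hxc).1

theorem injOn_update_declone [DecidableEq α] (hd₀ : d₀ ∈ D) :
    InjOn (Function.update id c d₀) ((C \ D) ∪ {c}) := by
  have hfix : ∀ {x}, x ∈ (C \ D) ∪ {c} → x ≠ c → Function.update id c d₀ x ≠ d₀ :=
    fun hx hxc h => (hx.resolve_right hxc).2 <| by
      rw [Function.update_of_ne hxc, id_eq] at h
      exact h ▸ hd₀
  intro x hx y hy hxy
  by_cases hxc : x = c <;> by_cases hyc : y = c
  · exact hxc.trans hyc.symm
  · subst hxc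
    exact absurd (hxy.symm.trans (Function.update_self _ d₀ id)) (hfix hy hyc)
  · subst hyc
    exact absurd (hxy.trans (Function.update_self _ d₀ id)) (hfix hx hxc)
  · rwa [Function.update_of_ne hxc, Function.update_of_ne hyc] at hxy

theorem decloneRel_iff_update [DecidableEq α] (hr : IsLinOn C r) (hDC : D ⊆ C)
    (hclone : ∀ d ∈ D, ∀ d' ∈ D, ∀ a ∈ C \ D, r d a ↔ r d' a) (hd₀ : d₀ ∈ D)
    {x y : α} (hx : x ∈ (C \ D) ∪ {c}) (hy : y ∈ (C \ D) ∪ {c}) :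
    decloneRel r D c x y ↔ r (Function.update id c d₀ x) (Function.update id c d₀ y) := by
  by_cases hxc : x = c <;> by_cases hyc : y = c
  · subst hxc hyc
    simpa [decloneRel] using hr.1 d₀ (hDC hd₀)
  · subst hxc
    have hyCD := hy.resolve_right hyc
    simp only [decloneRel, Function.update_self, Function.update_of_ne hyc, id_eq, ne_eq, hyc,
      not_true_eq_false, not_false_eq_true, true_and, false_and, or_false, false_or]
    exact ⟨fun ⟨d, hd, hdy⟩ => (hclone d hd d₀ hd₀ y hyCD).1 hdy, fun h => ⟨d₀, hd₀, h⟩⟩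
  · subst hyc
    have hxCD := hx.resolve_right hxc
    simp only [decloneRel, Function.update_self, Function.update_of_ne hxc, id_eq, ne_eq, hxc,
      not_true_eq_false, not_false_eq_true, true_and, false_and, and_false, false_or]
    exact ⟨fun ⟨d, hd, hxd⟩ => (hr.rel_iff_of_clone hDC hclone hd hd₀ hxCD).1 hxd,
      fun h => ⟨d₀, hd₀, h⟩⟩
  · simp [decloneRel, hxc, hyc]

end Declone

theorem declone_single_peaked_general (C : Set α) {n : ℕ}
    (R : Fin n → α → α → Prop) (hR : IsProfile C R) (hsp : SinglePeaked C R)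
    (D : Set α) (hD : IsCloneSet C R D)
    (c : α) :
    SinglePeaked ((C \ D) ∪ {c}) (fun i => decloneRel (R i) D c) := by
  classical
  obtain ⟨ax, hax⟩ := hsp
  obtain ⟨⟨d₀, hd₀⟩, hDC, hclone⟩ := hD
  exact ⟨_, hax.comap (mapsTo_update_declone (hDC hd₀)) (injOn_update_declone hd₀)
    fun i _ hx _ hy => decloneRel_iff_update (hR.2 i) hDC
      (fun d hd d' hd' a ha => hclone d hd d' hd' a ha i) hd₀ hx hy⟩

theorem declone_single_peaked (C : Set α) (hC : C.Finite) {n : ℕ}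
    (R : Fin n → α → α → Prop) (hR : IsProfile C R) (hsp : SinglePeaked C R)
    (D : Set α) (hD : IsCloneSet C R D) (hcard : 2 ≤ D.ncard)
    (c : α) (hc : c ∉ C) :
    SinglePeaked ((C \ D) ∪ {c}) (fun i => decloneRel (R i) D c) :=
  declone_single_peaked_general C R hR hsp D hD c
end

section
/- Let R be a preference profile over a finite candidate set C that is single-peaked with respect to a societal axis >, and let D be a clone set for R that is of the second type with respect to >, i.e., the members of D do not appear contiguously in >. Then D contains no peaks of R: D ∩ peak(R) = ∅. -/
variable {α : Type*}

/-- `D` appears contiguously in the axis `gt` (a clone set of the first type). -/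
def ContiguousIn (C : Set α) (gt : α → α → Prop) (D : Set α) : Prop :=
  ¬∃ a ∈ C \ D, ∃ d ∈ D, ∃ d' ∈ D, gt d a ∧ gt a d'

/-! A voter whose peak lies in a clone set `D` ranks every member of `D` above every candidate
outside `D`. If `D` is not contiguous on the axis, some outside candidate `a` lies between two
members `d > a > d'`; single-peakedness forbids a candidate between two others on the axis from
being ranked below both, so no voter can have their peak in `D`. -/

theorem AxisCompatible.not_rel_of_between {C : Set α} {ax r : α → α → Prop}
    (hr : IsLinOn C r) (hcomp : AxisCompatible C ax r) {a d d' : α}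
    (ha : a ∈ C) (hd : d ∈ C) (hd' : d' ∈ C) (hda : ax d a) (had' : ax a d') (hrda : r d a) :
    ¬r d' a := by
  obtain ⟨hirr, htrans, -⟩ := hr
  have hrad' : r a d' := hcomp d hd a ha d' hd' (Or.inl ⟨hda, had'⟩) hrda
  exact fun hrd'a => hirr a ha (htrans a ha d' hd' a ha hrad' hrd'a)

theorem IsCloneSet.rel_of_isPeakOf {C D : Set α} {n : ℕ} {R : Fin n → α → α → Prop}
    (hD : IsCloneSet C R D) {i : Fin n} {p : α} (hp : IsPeakOf C (R i) p) (hpD : p ∈ D)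
    {d a : α} (hdD : d ∈ D) (ha : a ∈ C \ D) : R i d a :=
  (hD.2.2 p hpD d hdD a ha i).mp (hp.2 a ha.1 fun hap => ha.2 (hap ▸ hpD))

theorem second_type_clone_no_peaks_general (C : Set α) {n : ℕ}
    (R : Fin n → α → α → Prop) (hR : IsProfile C R)
    (gt : α → α → Prop) (hsp : SinglePeakedWrt C R gt)
    (D : Set α) (hD : IsCloneSet C R D) (hsecond : ¬ContiguousIn C gt D) :
    D ∩ peakSet C R = ∅ := by
  refine Set.eq_empty_iff_forall_notMem.mpr fun p ⟨hpD, i, hp⟩ => ?_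
  obtain ⟨a, ha, d, hdD, d', hd'D, hda, had'⟩ := not_not.mp hsecond
  exact (hsp.2 i).not_rel_of_between (hR.2 i) ha.1 (hD.2.1 hdD) (hD.2.1 hd'D) hda had'
    (hD.rel_of_isPeakOf hp hpD hdD ha) (hD.rel_of_isPeakOf hp hpD hd'D ha)

theorem second_type_clone_no_peaks (C : Set α) (hC : C.Finite) {n : ℕ}
    (R : Fin n → α → α → Prop) (hR : IsProfile C R)
    (gt : α → α → Prop) (hsp : SinglePeakedWrt C R gt)
    (D : Set α) (hD : IsCloneSet C R D) (hsecond : ¬ContiguousIn C gt D) :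
    D ∩ peakSet C R = ∅ :=
  second_type_clone_no_peaks_general C R hR gt hsp D hD hsecond
end

section
/- Strings of sausages and fat sausages are single-peaked clone structures: for every finite candidate set C, (a) there exists a single-peaked preference profile R over C such that 𝒞(R) is a string of sausages over C, and (b) there exists a single-peaked preference profile R' over C such that 𝒞(R') is the fat sausage over C, i.e., 𝒞(R') = {C} ∪ {{c} : c ∈ C}. -/
variable {α : Type*}

/-- `𝓕` is a string of sausages over `F`: the family of all intervals of some
enumeration of `F`. -/
def IsStringOfSausages (F : Set α) (𝓕 : Set (Set α)) : Prop :=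
  ∃ (m : ℕ) (f : Fin m → α), Function.Injective f ∧ Set.range f = F ∧
    𝓕 = {S | ∃ i j : Fin m, i ≤ j ∧ S = f '' Set.Icc i j}

/-- `𝓕` is a fat sausage over `F`: the whole set together with all singletons. -/
def IsFatSausage (F : Set α) (𝓕 : Set (Set α)) : Prop :=
  𝓕 = ({F} : Set (Set α)) ∪ {S | ∃ x ∈ F, S = ({x} : Set α)}

/-!
Everything is transported along an enumeration `Fin m → α` of `C`, so it suffices to work on a
finite linear order with the axis `<`. A single voter who votes by the axis has exactly the
nonempty intervals as clone sets. For the fat sausage, take for every candidate `p` the two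
single-peaked voters with peak `p` who sweep upwards first, resp. downwards first: for distinct
`x`, `y` and any `z`, one of the four voters peaked at `x` or `y` ranks exactly one of `x`, `y`
above `z`, so a clone set with two elements has no outside candidate.
-/

open Set Function

section Transport

variable {β : Type*} {f : β → α}

lemma IsLinOn.map (hf : Injective f) {r : β → β → Prop} (hr : IsLinOn univ r) :
    IsLinOn (range f) (Relation.Map r f f) := by
  obtain ⟨irrefl, trans, total⟩ := hr
  refine ⟨?_, ?_, ?_⟩
  · rintro _ ⟨a, rfl⟩
    simpa [hf] using irrefl a trivial
  · rintro _ ⟨a, rfl⟩ _ ⟨b, rfl⟩ _ ⟨c, rfl⟩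
    simpa [hf] using trans a trivial b trivial c trivial
  · rintro _ ⟨a, rfl⟩ _ ⟨b, rfl⟩ hab
    simpa [hf] using total a trivial b trivial (ne_of_apply_ne f hab)

lemma AxisCompatible.map (hf : Injective f) {ax r : β → β → Prop}
    (h : AxisCompatible univ ax r) :
    AxisCompatible (range f) (Relation.Map ax f f) (Relation.Map r f f) := by
  rintro _ ⟨a, rfl⟩ _ ⟨b, rfl⟩ _ ⟨c, rfl⟩
  simpa [hf] using h a trivial b trivial c trivial

variable {n : ℕ} {R : Fin n → β → β → Prop}

lemma IsProfile.map (hf : Injective f) (h : IsProfile univ R) :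
    IsProfile (range f) (fun i => Relation.Map (R i) f f) :=
  ⟨h.1, fun i => (h.2 i).map hf⟩

lemma SinglePeakedWrt.map (hf : Injective f) {ax : β → β → Prop}
    (h : SinglePeakedWrt univ R ax) :
    SinglePeakedWrt (range f) (fun i => Relation.Map (R i) f f) (Relation.Map ax f f) :=
  ⟨h.1.map hf, fun i => (h.2 i).map hf⟩

lemma isCloneSet_image_iff (hf : Injective f) (Y : Set β) :
    IsCloneSet (range f) (fun i => Relation.Map (R i) f f) (f '' Y) ↔ IsCloneSet univ R Y := by
  simp only [IsCloneSet, image_nonempty, ← image_univ, image_subset_image_iff hf, subset_univ,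
    true_and, ← image_sdiff hf, forall_mem_image, Relation.map_apply_apply hf hf]

lemma cloneSets_map (hf : Injective f) :
    cloneSets (range f) (fun i => Relation.Map (R i) f f) = image f '' cloneSets univ R := by
  ext X
  constructor
  · intro hX
    have hX' : f '' (f ⁻¹' X) = X := image_preimage_eq_of_subset hX.2.1
    exact ⟨f ⁻¹' X, (isCloneSet_image_iff hf _).1 (by rwa [hX']), hX'⟩
  · rintro ⟨Y, hY, rfl⟩
    exact (isCloneSet_image_iff hf Y).2 hY

lemma IsStringOfSausages.image (hf : Injective f) {𝓕 : Set (Set β)}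
    (h : IsStringOfSausages univ 𝓕) : IsStringOfSausages (range f) (image f '' 𝓕) := by
  obtain ⟨m, g, hg, hrange, rfl⟩ := h
  refine ⟨m, f ∘ g, hf.comp hg, by rw [range_comp, hrange, image_univ], ?_⟩
  ext S
  simp [image_image, eq_comm]

lemma IsFatSausage.image {𝓕 : Set (Set β)} (h : IsFatSausage univ 𝓕) :
    IsFatSausage (range f) (image f '' 𝓕) := by
  rw [IsFatSausage] at h ⊢
  subst h
  ext S
  simp [eq_comm]

end Transport

lemma IsCloneSet.iff {β : Type*} {n : ℕ} {R : Fin n → β → β → Prop} {X : Set β}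
    (hX : IsCloneSet univ R X) {c c' a : β} (hc : c ∈ X) (hc' : c' ∈ X) (ha : a ∉ X)
    (i : Fin n) : R i c a ↔ R i c' a :=
  hX.2.2 c hc c' hc' a ⟨trivial, ha⟩ i

section LinearOrder

variable {β : Type*} [LinearOrder β]

lemma isLinOn_univ_lt : IsLinOn (univ : Set β) (· < ·) :=
  ⟨fun a _ => lt_irrefl a, fun _ _ _ _ _ _ => lt_trans, fun _ _ _ _ => Ne.lt_or_gt⟩

lemma axisCompatible_lt_lt : AxisCompatible (univ : Set β) (· < ·) (· < ·) := by
  rintro c - d - e - (⟨-, hde⟩ | ⟨-, hdc⟩) hcd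
  · exact hde
  · exact absurd hcd hdc.not_gt

lemma cloneSets_lt :
    cloneSets univ (fun _ : Fin 1 => ((· < ·) : β → β → Prop)) =
      {X | X.Nonempty ∧ X.OrdConnected} := by
  ext X
  constructor
  · intro hX
    refine ⟨hX.1, ⟨fun x hx y hy z ⟨hxz, hzy⟩ => by_contra fun hz => ?_⟩⟩
    have hxz' : x < z := hxz.lt_of_ne (by rintro rfl; exact hz hx)
    have hzy' : z < y := hzy.lt_of_ne (by rintro rfl; exact hz hy)
    exact hzy'.not_gt ((hX.iff hx hy hz 0).1 hxz')
  · rintro ⟨hne, hX⟩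
    have below : ∀ c ∈ X, ∀ c' ∈ X, ∀ a ∉ X, c < a → c' < a :=
      fun c hc c' hc' a ha hca => lt_of_not_ge fun hac' => ha (hX.out hc hc' ⟨hca.le, hac'⟩)
    exact ⟨hne, subset_univ X, fun c hc c' hc' a ha _ =>
      ⟨below c hc c' hc' a ha.2, below c' hc' c hc a ha.2⟩⟩

lemma setOf_nonempty_ordConnected_eq [Finite β] :
    {X : Set β | X.Nonempty ∧ X.OrdConnected} = {S | ∃ i j, i ≤ j ∧ S = Icc i j} := by
  ext X
  constructor
  · rintro ⟨hne, hX⟩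
    obtain ⟨a, ha, hmin⟩ := X.exists_min_image id X.toFinite hne
    obtain ⟨b, hb, hmax⟩ := X.exists_max_image id X.toFinite hne
    exact ⟨a, b, hmin b hb, (hX.out ha hb).antisymm' fun x hx => ⟨hmin x hx, hmax x hx⟩⟩
  · rintro ⟨i, j, hij, rfl⟩
    exact ⟨nonempty_Icc.2 hij, ordConnected_Icc⟩

/-- Peak `p`, then the candidates above `p` in increasing order, then those below `p` in
decreasing order. -/
def sweepUp (p x y : β) : Prop :=
  (p ≤ x ∧ (y < p ∨ x < y)) ∨ (y < x ∧ x < p)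

/-- Peak `p`, then the candidates below `p` in decreasing order, then those above `p` in
increasing order. -/
def sweepDown (p x y : β) : Prop :=
  (x ≤ p ∧ (p < y ∨ y < x)) ∨ (p < x ∧ x < y)

lemma isLinOn_sweepUp (p : β) : IsLinOn univ (sweepUp p) := by
  refine ⟨?_, ?_, ?_⟩ <;> simp only [mem_univ, true_implies, sweepUp] <;> intros <;> grind

lemma isLinOn_sweepDown (p : β) : IsLinOn univ (sweepDown p) := by
  refine ⟨?_, ?_, ?_⟩ <;> simp only [mem_univ, true_implies, sweepDown] <;> intros <;> grind

lemma axisCompatible_sweepUp (p : β) : AxisCompatible univ (· < ·) (sweepUp p) := by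
  simp only [AxisCompatible, mem_univ, true_implies, sweepUp]
  intros
  grind

lemma axisCompatible_sweepDown (p : β) : AxisCompatible univ (· < ·) (sweepDown p) := by
  simp only [AxisCompatible, mem_univ, true_implies, sweepDown]
  intros
  grind

lemma sweeps_separate {x y : β} (hxy : x ≠ y) (z : β) :
    ¬ ∀ p ∈ ({x, y} : Set β),
      (sweepUp p x z ↔ sweepUp p y z) ∧ (sweepDown p x z ↔ sweepDown p y z) := by
  intro h
  have hx := h x (by simp)
  have hy := h y (by simp)
  simp only [sweepUp, sweepDown] at hx hy
  grind

lemma isFatSausage_cloneSets_of_sweeps [Nonempty β] {n : ℕ} {R : Fin n → β → β → Prop}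
    (hup : ∀ p, ∃ i, R i = sweepUp p) (hdown : ∀ p, ∃ i, R i = sweepDown p) :
    IsFatSausage univ (cloneSets univ R) := by
  ext X
  constructor
  · intro hX
    obtain ⟨x, hx⟩ := hX.1
    by_cases hsub : X ⊆ {x}
    · exact Or.inr ⟨x, trivial, (subset_singleton_iff_eq.1 hsub).resolve_left hX.1.ne_empty⟩
    · obtain ⟨y, hy, hyx⟩ := not_subset.1 hsub
      refine Or.inl (eq_univ_of_forall fun z => by_contra fun hz => ?_)
      refine sweeps_separate (Ne.symm hyx) z fun p _ => ⟨?_, ?_⟩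
      · obtain ⟨i, hi⟩ := hup p
        simpa only [hi] using hX.iff hx hy hz i
      · obtain ⟨i, hi⟩ := hdown p
        simpa only [hi] using hX.iff hx hy hz i
  · rintro (rfl | ⟨x, -, rfl⟩)
    · exact ⟨univ_nonempty, subset_rfl, fun _ _ _ _ _ ha => (ha.2 trivial).elim⟩
    · exact ⟨singleton_nonempty x, subset_univ _, by rintro _ rfl _ rfl _ _ _; rfl⟩

end LinearOrder

lemma isStringOfSausages_cloneSets_lt (m : ℕ) :
    IsStringOfSausages univ
      (cloneSets univ fun _ : Fin 1 => ((· < ·) : Fin m → Fin m → Prop)) :=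
  ⟨m, id, injective_id, range_id, by rw [cloneSets_lt, setOf_nonempty_ordConnected_eq]; simp⟩

section SweepProfile

variable (m : ℕ)

def sweepProfile : Fin (m + m) → Fin m → Fin m → Prop :=
  Fin.append sweepUp sweepDown

lemma isProfile_sweepProfile [NeZero m] : IsProfile univ (sweepProfile m) := by
  refine ⟨by have := NeZero.pos m; omega, Fin.addCases (fun p => ?_) (fun p => ?_)⟩
  · rw [sweepProfile, Fin.append_left]
    exact isLinOn_sweepUp p
  · rw [sweepProfile, Fin.append_right]
    exact isLinOn_sweepDown p

lemma singlePeakedWrt_sweepProfile : SinglePeakedWrt univ (sweepProfile m) (· < ·) := by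
  refine ⟨isLinOn_univ_lt, Fin.addCases (fun p => ?_) (fun p => ?_)⟩
  · rw [sweepProfile, Fin.append_left]
    exact axisCompatible_sweepUp p
  · rw [sweepProfile, Fin.append_right]
    exact axisCompatible_sweepDown p

lemma isFatSausage_cloneSets_sweepProfile [NeZero m] :
    IsFatSausage univ (cloneSets univ (sweepProfile m)) :=
  isFatSausage_cloneSets_of_sweeps (fun p => ⟨Fin.castAdd m p, Fin.append_left _ _ p⟩)
    (fun p => ⟨Fin.natAdd m p, Fin.append_right _ _ p⟩)

end SweepProfile

theorem string_and_fat_sausage_single_peaked (C : Set α) (hC : C.Finite)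
    (hne : C.Nonempty) :
    (∃ (n : ℕ) (R : Fin n → α → α → Prop),
        IsProfile C R ∧ SinglePeaked C R ∧ IsStringOfSausages C (cloneSets C R)) ∧
      ∃ (n : ℕ) (R : Fin n → α → α → Prop),
        IsProfile C R ∧ SinglePeaked C R ∧
          cloneSets C R = ({C} : Set (Set α)) ∪ {S | ∃ x ∈ C, S = ({x} : Set α)} := by
  obtain ⟨m, f, hf, rfl⟩ := hC.fin_param
  obtain ⟨_, i, -⟩ := hne
  have : NeZero m := NeZero.of_pos i.pos
  refine ⟨⟨1, fun _ => Relation.Map (· < ·) f f, ?_, ?_, ?_⟩,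
    ⟨m + m, fun i => Relation.Map (sweepProfile m i) f f, ?_, ?_, ?_⟩⟩
  · exact IsProfile.map hf ⟨one_pos, fun _ => isLinOn_univ_lt⟩
  · exact ⟨_, SinglePeakedWrt.map hf ⟨isLinOn_univ_lt, fun _ => axisCompatible_lt_lt⟩⟩
  · rw [cloneSets_map hf]
    exact (isStringOfSausages_cloneSets_lt m).image hf
  · exact (isProfile_sweepProfile m).map hf
  · exact ⟨_, (singlePeakedWrt_sweepProfile m).map hf⟩
  · rw [cloneSets_map hf]
    exact (isFatSausage_cloneSets_sweepProfile m).image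
end
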